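/- arXiv:2310.19976 — 4 statements merged into one kernel-verified Lean document; each statement's English description precedes it below -/
import Mathlib

section
/- Let (Ω, M) be a finite Borel measure space and {P_t : t ≥ 0} a family of Borel subsets of Ω such that (t, ω) ↦ 1_{P_t}(ω) is measurable on ℝ_{≥0} × Ω. Suppose (1) ∫_0^∞ M(P_t) dt = ∞, and (2) there is a constant C such that for all sufficiently large T, ∫_0^T ∫_0^T M(P_t ∩ P_s) dt ds ≤ C (∫_0^T M(P_t) dt)². Then the set of ω ∈ Ω with ∫_0^∞ 1_{P_t}(ω) dt = ∞ has positive M-measure. -/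
open MeasureTheory
open scoped ENNReal

/-- Continuous-time Borel–Cantelli lemma (Aaronson–Sullivan type):
if the expected occupation time is infinite and the second moment is
controlled by the square of the first moment, then the set of points with
infinite occupation time has positive measure. -/
theorem stmt_0 {Ω : Type*} [MeasurableSpace Ω] (M : Measure Ω) [IsFiniteMeasure M]
    (P : ℝ → Set Ω)
    (hmeas : MeasurableSet {p : ℝ × Ω | 0 ≤ p.1 ∧ p.2 ∈ P p.1})
    (h1 : ∫⁻ t in Set.Ici (0:ℝ), M (P t) = ⊤)
    (h2 : ∃ C : ℝ≥0∞, C ≠ ⊤ ∧ ∃ T₀ : ℝ, ∀ T ≥ T₀,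
      ∫⁻ t in Set.Icc (0:ℝ) T, ∫⁻ s in Set.Icc (0:ℝ) T, M (P t ∩ P s)
        ≤ C * (∫⁻ t in Set.Icc (0:ℝ) T, M (P t)) ^ 2) :
    0 < M {ω | ∫⁻ t in Set.Ici (0:ℝ), (P t).indicator (fun _ => (1:ℝ≥0∞)) ω = ⊤} := by
  classical
  obtain ⟨C, hC_top, T₀, hT₀⟩ := h2
  set S : Set (ℝ × Ω) := {p : ℝ × Ω | 0 ≤ p.1 ∧ p.2 ∈ P p.1} with hSdef
  have hgm : Measurable (S.indicator (fun _ => (1:ℝ≥0∞))) :=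
    measurable_const.indicator hmeas
  set g : ℝ → Ω → ℝ≥0∞ := fun t ω => S.indicator (fun _ => (1:ℝ≥0∞)) (t, ω) with hgdef
  have hg_eq : ∀ t : ℝ, 0 ≤ t → ∀ ω, g t ω = (P t).indicator (fun _ => (1:ℝ≥0∞)) ω := by
    intro t ht ω
    simp only [hgdef, Set.indicator_apply, Set.mem_setOf_eq, hSdef]
    by_cases h : ω ∈ P t <;> simp [h, ht]
  have hg_le : ∀ t ω, g t ω ≤ 1 := by
    intro t ω
    simp only [hgdef, Set.indicator_apply]
    split <;> simp
  have hPmeas : ∀ t : ℝ, 0 ≤ t → MeasurableSet (P t) := by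
    intro t ht
    have h' : MeasurableSet {ω | (t, ω) ∈ S} := measurable_prodMk_left hmeas
    convert h' using 1
    ext ω; simp [hSdef, ht]
  set f : ℝ → Ω → ℝ≥0∞ := fun T ω => ∫⁻ t in Set.Icc (0:ℝ) T, g t ω with hfdef
  have hfmeas : ∀ T, Measurable (f T) := by
    intro T
    exact Measurable.lintegral_prod_left' hgm
  have hMg : ∀ t : ℝ, 0 ≤ t → ∫⁻ ω, g t ω ∂M = M (P t) := by
    intro t ht
    rw [show (fun ω => g t ω) = (P t).indicator (fun _ => (1:ℝ≥0∞)) from funext (hg_eq t ht)]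
    rw [lintegral_indicator (hPmeas t ht)]
    simp
  set h : ℝ → ℝ≥0∞ := fun t => ∫⁻ ω, g t ω ∂M with hhdef
  have hhmeas : Measurable h := Measurable.lintegral_prod_right' hgm
  set I : ℝ → ℝ≥0∞ := fun T => ∫⁻ t in Set.Icc (0:ℝ) T, M (P t) with hIdef
  have hIh : ∀ T : ℝ, I T = ∫⁻ t in Set.Icc (0:ℝ) T, h t := by
    intro T
    refine setLIntegral_congr_fun measurableSet_Icc ?_
    exact fun t ht => (hMg t ht.1).symm
  have hfirst : ∀ T : ℝ, ∫⁻ ω, f T ω ∂M = I T := by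
    intro T
    rw [hIh]
    exact lintegral_lintegral_swap ((hgm.comp measurable_swap).aemeasurable)
  have hIfin : ∀ T : ℝ, I T ≠ ⊤ := by
    intro T
    have hle : I T ≤ ∫⁻ _t in Set.Icc (0:ℝ) T, M Set.univ :=
      lintegral_mono fun t => measure_mono (Set.subset_univ _)
    rw [setLIntegral_const] at hle
    exact ne_top_of_le_ne_top (ENNReal.mul_ne_top (measure_ne_top M _)
      measure_Icc_lt_top.ne) hle
  have hImono : ∀ ⦃a b : ℝ⦄, a ≤ b → I a ≤ I b := fun a b hab =>
    lintegral_mono_set (Set.Icc_subset_Icc_right hab)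
  have hM0 : M Set.univ ≠ 0 := by
    intro h0
    have hz : ∀ t : ℝ, M (P t) = 0 := fun t =>
      le_antisymm (h0 ▸ measure_mono (Set.subset_univ _)) zero_le
    simp [hz] at h1
  have hsup : (⨆ n : ℕ, I (n : ℝ)) = ⊤ := by
    have hIci : ∫⁻ t in Set.Ici (0:ℝ), h t = ⊤ := by
      rw [← h1]
      exact setLIntegral_congr_fun measurableSet_Ici
        (fun t ht => hMg t ht)
    have hpt : ∀ t : ℝ, (⨆ n : ℕ, (Set.Icc (0:ℝ) (n:ℝ)).indicator h t)
        = (Set.Ici (0:ℝ)).indicator h t := by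
      intro t
      by_cases ht : 0 ≤ t
      · obtain ⟨n, hn⟩ := exists_nat_ge t
        apply le_antisymm
        · exact iSup_le fun m => Set.indicator_le_indicator_of_subset
            (fun x hx => hx.1) (fun _ => zero_le) t
        · refine le_iSup_of_le n (le_of_eq ?_)
          rw [Set.indicator_of_mem (Set.mem_Ici.mpr ht),
            Set.indicator_of_mem (Set.mem_Icc.mpr ⟨ht, hn⟩)]
      · simp [Set.indicator_of_notMem, ht, Set.mem_Icc, Set.mem_Ici]
    have hmono : Monotone fun n : ℕ => (Set.Icc (0:ℝ) (n:ℝ)).indicator h := by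
      intro a b hab
      intro t
      exact Set.indicator_le_indicator_of_subset
        (Set.Icc_subset_Icc_right (by exact_mod_cast hab)) (fun _ => zero_le) t
    have hmc := lintegral_iSup (μ := volume)
      (fun n : ℕ => hhmeas.indicator measurableSet_Icc) hmono
    calc (⨆ n : ℕ, I (n : ℝ))
        = ⨆ n : ℕ, ∫⁻ t, (Set.Icc (0:ℝ) (n:ℝ)).indicator h t := by
          refine iSup_congr fun n => ?_
          rw [hIh, lintegral_indicator measurableSet_Icc]
      _ = ∫⁻ t, ⨆ n : ℕ, (Set.Icc (0:ℝ) (n:ℝ)).indicator h t := hmc.symm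
      _ = ∫⁻ t, (Set.Ici (0:ℝ)).indicator h t := by
          congr 1; funext t; exact hpt t
      _ = ⊤ := by rw [← lintegral_indicator measurableSet_Ici] at hIci; exact hIci
  have hseq : ∀ n : ℕ, ∃ Tn : ℝ, T₀ ≤ Tn ∧ (n : ℝ≥0∞) < I Tn := by
    intro n
    have hlt : (n : ℝ≥0∞) < ⨆ m : ℕ, I (m : ℝ) := by
      rw [hsup]; exact ENNReal.natCast_lt_top n
    obtain ⟨m, hm⟩ := lt_iSup_iff.mp hlt
    exact ⟨max (m:ℝ) T₀, le_max_right _ _, lt_of_lt_of_le hm (hImono (le_max_left _ _))⟩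
  choose T hTT₀ hTbig using hseq
  have hsecond : ∀ Tv : ℝ, ∫⁻ ω, f Tv ω ^ 2 ∂M
      = ∫⁻ t in Set.Icc (0:ℝ) Tv, ∫⁻ s in Set.Icc (0:ℝ) Tv, M (P t ∩ P s) := by
    intro Tv
    have hmw : ∀ ω, Measurable fun t => g t ω := fun ω =>
      hgm.comp (measurable_id.prodMk measurable_const)
    have hsq : ∀ ω, f Tv ω ^ 2
        = ∫⁻ t in Set.Icc (0:ℝ) Tv, (∫⁻ s in Set.Icc (0:ℝ) Tv, g t ω * g s ω) := by
      intro ω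
      simp only [hfdef]
      rw [pow_two, ← lintegral_mul_const _ (hmw ω)]
      refine lintegral_congr fun t => ?_
      exact (lintegral_const_mul' _ _ (lt_of_le_of_lt (hg_le t ω) ENNReal.one_lt_top).ne).symm
    have hprod : ∀ t s : ℝ, 0 ≤ t → 0 ≤ s →
        ∫⁻ ω, g t ω * g s ω ∂M = M (P t ∩ P s) := by
      intro t s ht hs
      have heq : (fun ω => g t ω * g s ω) = (P t ∩ P s).indicator (fun _ => (1:ℝ≥0∞)) := by
        funext ω
        rw [hg_eq t ht, hg_eq s hs]
        by_cases hm1 : ω ∈ P t <;> by_cases hm2 : ω ∈ P s <;>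
          simp [Set.indicator_apply, hm1, hm2]
      rw [heq, lintegral_indicator ((hPmeas t ht).inter (hPmeas s hs))]
      simp
    have hG2 : Measurable fun p : Ω × ℝ => ∫⁻ s in Set.Icc (0:ℝ) Tv, g p.2 p.1 * g s p.1 :=
      Measurable.lintegral_prod_right' (ν := volume.restrict (Set.Icc (0:ℝ) Tv))
        (f := fun q : (Ω × ℝ) × ℝ => g q.1.2 q.1.1 * g q.2 q.1.1)
        (((hgm.comp ((measurable_fst.snd).prodMk measurable_fst.fst)).mul
          (hgm.comp (measurable_snd.prodMk measurable_fst.fst))))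
    calc ∫⁻ ω, f Tv ω ^ 2 ∂M
        = ∫⁻ ω, (∫⁻ t in Set.Icc (0:ℝ) Tv, (∫⁻ s in Set.Icc (0:ℝ) Tv, g t ω * g s ω)) ∂M :=
          lintegral_congr hsq
      _ = ∫⁻ t in Set.Icc (0:ℝ) Tv, ∫⁻ ω, (∫⁻ s in Set.Icc (0:ℝ) Tv, g t ω * g s ω) ∂M :=
          lintegral_lintegral_swap hG2.aemeasurable
      _ = ∫⁻ t in Set.Icc (0:ℝ) Tv, ∫⁻ s in Set.Icc (0:ℝ) Tv, M (P t ∩ P s) := by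
          refine setLIntegral_congr_fun measurableSet_Icc
            (fun t ht => ?_)
          have hInner : Measurable fun p : Ω × ℝ => g t p.1 * g p.2 p.1 :=
            (hgm.comp (measurable_const.prodMk measurable_fst)).mul
              (hgm.comp (measurable_snd.prodMk measurable_fst))
          calc ∫⁻ ω, (∫⁻ s in Set.Icc (0:ℝ) Tv, g t ω * g s ω) ∂M
              = ∫⁻ s in Set.Icc (0:ℝ) Tv, ∫⁻ ω, g t ω * g s ω ∂M :=
                lintegral_lintegral_swap hInner.aemeasurable
            _ = _ := setLIntegral_congr_fun measurableSet_Icc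
                (fun s hs => hprod t s ht.1 hs.1)
  have hMtop : M Set.univ ≠ ⊤ := measure_ne_top M _
  have hC1ne0 : C + 1 ≠ 0 := (lt_of_lt_of_le zero_lt_one le_add_self).ne'
  have hC1top : C + 1 ≠ ⊤ := by simp [hC_top]
  set ε : ℝ≥0∞ := (4 * (C + 1))⁻¹ with hεdef
  have hεpos : 0 < ε := ENNReal.inv_pos.mpr (ENNReal.mul_ne_top (by simp) hC1top)
  set A : ℕ → Set Ω := fun n => {ω | I (T n) / (2 * M Set.univ) ≤ f (T n) ω} with hAdef
  have hAmeas : ∀ n, MeasurableSet (A n) :=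
    fun n => measurableSet_le measurable_const (hfmeas _)
  have hsqrt : ∀ x : ℝ≥0∞, (x ^ (1/2 : ℝ)) ^ (2:ℕ) = x := by
    intro x
    rw [← ENNReal.rpow_natCast (x ^ (1/2:ℝ)) 2, ← ENNReal.rpow_mul]
    norm_num
  have hPZ : ∀ n, ε ≤ M (A n) := by
    intro n
    have hIpos : I (T n) ≠ 0 := (lt_of_le_of_lt zero_le (hTbig n)).ne'
    have hIfin' : I (T n) ≠ ⊤ := hIfin (T n)
    -- Step 1: I/2 ≤ ∫ indicator
    have hsplit : I (T n) / 2 ≤ ∫⁻ ω, (A n).indicator (f (T n)) ω ∂M := by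
      have hpt : ∀ ω, f (T n) ω
          ≤ (A n).indicator (f (T n)) ω + I (T n) / (2 * M Set.univ) := by
        intro ω
        by_cases hω : ω ∈ A n
        · rw [Set.indicator_of_mem hω]; exact le_self_add
        · rw [Set.indicator_of_notMem hω]
          rw [zero_add]
          exact (not_le.mp hω).le
      have hmono := lintegral_mono (μ := M) hpt
      rw [hfirst (T n), lintegral_add_right _ measurable_const, lintegral_const] at hmono
      have hc : I (T n) / (2 * M Set.univ) * M Set.univ = I (T n) / 2 := by
        rw [div_eq_mul_inv, mul_right_comm, ← div_eq_mul_inv]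
        exact ENNReal.mul_div_mul_right _ _ hM0 hMtop
      rw [hc] at hmono
      have h2' := tsub_le_iff_right.mpr hmono
      rwa [ENNReal.sub_half hIfin'] at h2'
    -- Step 2: Cauchy-Schwarz
    have hind : (fun ω => (A n).indicator (f (T n)) ω)
        = fun ω => (f (T n) * (A n).indicator (fun _ => (1:ℝ≥0∞))) ω := by
      funext ω
      by_cases hω : ω ∈ A n <;>
        simp [Set.indicator_apply, hω]
    have hconj : Real.HolderConjugate 2 2 := Real.HolderConjugate.two_two
    have hH := ENNReal.lintegral_mul_le_Lp_mul_Lq M hconj (f := f (T n))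
      (g := (A n).indicator fun _ => (1:ℝ≥0∞)) (hfmeas (T n)).aemeasurable
      ((measurable_const.indicator (hAmeas n)).aemeasurable)
    have hv : ∫⁻ ω, ((A n).indicator (fun _ => (1:ℝ≥0∞)) ω) ^ (2:ℝ) ∂M = M (A n) := by
      have : ∀ ω, ((A n).indicator (fun _ => (1:ℝ≥0∞)) ω) ^ (2:ℝ)
          = (A n).indicator (fun _ => (1:ℝ≥0∞)) ω := by
        intro ω
        by_cases hω : ω ∈ A n <;> simp [Set.indicator_apply, hω, ENNReal.rpow_two]
      rw [lintegral_congr this, lintegral_indicator (hAmeas n)]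
      simp
    have hu : ∫⁻ ω, (f (T n) ω) ^ (2:ℝ) ∂M = ∫⁻ ω, (f (T n) ω) ^ (2:ℕ) ∂M := by
      refine lintegral_congr fun ω => ?_
      rw [show ((2:ℝ)) = ((2:ℕ):ℝ) by norm_num, ENNReal.rpow_natCast]
    rw [hv, hu] at hH
    have hJ : ∫⁻ ω, (f (T n) ω) ^ (2:ℕ) ∂M ≤ (C + 1) * I (T n) ^ 2 := by
      rw [hsecond (T n)]
      exact le_trans (hT₀ (T n) (hTT₀ n)) (mul_le_mul_left le_self_add _)
    -- chain
    have hchain : I (T n) / 2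
        ≤ ((C + 1) * I (T n) ^ 2) ^ (1/2:ℝ) * (M (A n)) ^ (1/2:ℝ) := by
      refine le_trans hsplit (le_trans (le_of_eq (lintegral_congr fun ω => ?_)) (hH.trans ?_))
      · exact congrFun hind ω
      · exact mul_le_mul_left (ENNReal.rpow_le_rpow hJ (by norm_num)) _
    have hsq2 : I (T n) ^ 2 * 4⁻¹ ≤ I (T n) ^ 2 * ((C + 1) * M (A n)) := by
      have h1' : (I (T n) / 2) ^ (2:ℕ)
          ≤ (((C + 1) * I (T n) ^ 2) ^ (1/2:ℝ) * (M (A n)) ^ (1/2:ℝ)) ^ (2:ℕ) :=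
        pow_le_pow_left' hchain 2
      rw [mul_pow, hsqrt, hsqrt] at h1'
      calc I (T n) ^ 2 * 4⁻¹ = (I (T n) / 2) ^ (2:ℕ) := by
            rw [div_eq_mul_inv, mul_pow, ← ENNReal.inv_pow]
            norm_num
        _ ≤ (C + 1) * I (T n) ^ 2 * M (A n) := h1'
        _ = I (T n) ^ 2 * ((C + 1) * M (A n)) := by ring
    have hcancel : (4:ℝ≥0∞)⁻¹ ≤ (C + 1) * M (A n) := by
      have hne0 : I (T n) ^ 2 ≠ 0 := pow_ne_zero _ hIpos
      have hnetop : I (T n) ^ 2 ≠ ⊤ := by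
        simp [ENNReal.pow_eq_top_iff, hIfin']
      exact (ENNReal.mul_le_mul_iff_right hne0 hnetop).mp hsq2
    have hfin : (C+1)⁻¹ * 4⁻¹ ≤ M (A n) := by
      have := mul_le_mul_right hcancel (C+1)⁻¹
      rwa [← mul_assoc, ENNReal.inv_mul_cancel hC1ne0 hC1top, one_mul] at this
    rw [hεdef, ENNReal.mul_inv (Or.inl (by norm_num)) (Or.inl (by norm_num)), mul_comm]
    exact hfin
  set B : ℕ → Set Ω := fun n => ⋃ k, A (n + k) with hBdef
  have hBanti : Antitone B := by
    intro a b hab ω hω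
    obtain ⟨k, hk⟩ := Set.mem_iUnion.mp hω
    exact Set.mem_iUnion.mpr ⟨b - a + k, by rwa [show a + (b - a + k) = b + k by omega]⟩
  have hBmeas : ∀ n, MeasurableSet (B n) := fun n => MeasurableSet.iUnion fun k => hAmeas _
  have hBε : ∀ n, ε ≤ M (B n) := fun n =>
    le_trans (hPZ n) (measure_mono (by
      intro ω hω
      exact Set.mem_iUnion.mpr ⟨0, by simpa using hω⟩))
  have hInter : ε ≤ M (⋂ n, B n) := by
    rw [Directed.measure_iInter (fun n => (hBmeas n).nullMeasurableSet)
      (hBanti.directed_ge) ⟨0, measure_ne_top M _⟩]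
    exact le_iInf hBε
  refine lt_of_lt_of_le (lt_of_lt_of_le hεpos hInter) (measure_mono ?_)
  intro ω hω
  simp only [Set.mem_setOf_eq]
  by_contra hLtop
  have hLM : (∫⁻ t in Set.Ici (0:ℝ), (P t).indicator (fun _ => (1:ℝ≥0∞)) ω)
      * (2 * M Set.univ) ≠ ⊤ :=
    ENNReal.mul_ne_top hLtop (ENNReal.mul_ne_top (by norm_num) hMtop)
  obtain ⟨n, hn⟩ := ENNReal.exists_nat_gt hLM
  have hωn := Set.mem_iInter.mp hω n
  obtain ⟨k, hk⟩ := Set.mem_iUnion.mp hωn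
  have hA' : I (T (n + k)) / (2 * M Set.univ) ≤ f (T (n + k)) ω := hk
  have hstep1 : (n : ℝ≥0∞) / (2 * M Set.univ) ≤ f (T (n + k)) ω := by
    refine le_trans (ENNReal.div_le_div_right ?_ _) hA'
    exact le_trans (by exact_mod_cast Nat.cast_le.mpr (Nat.le_add_right n k)) (hTbig (n + k)).le
  have hstep2 : f (T (n + k)) ω ≤ ∫⁻ t in Set.Ici (0:ℝ), (P t).indicator (fun _ => (1:ℝ≥0∞)) ω := by
    refine le_trans (lintegral_mono_set Set.Icc_subset_Ici_self) (le_of_eq ?_)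
    exact setLIntegral_congr_fun measurableSet_Ici
      (fun t ht => hg_eq t ht ω)
  have hfinal := hstep1.trans hstep2
  rw [ENNReal.div_le_iff_le_mul (Or.inl ?hne) (Or.inl ?hnt)] at hfinal
  case hne => exact mul_ne_zero (by norm_num) hM0
  case hnt => exact ENNReal.mul_ne_top (by norm_num) hMtop
  exact absurd hfinal (not_le.mpr hn)
end

section
/- Let X be a metric space on which a group G acts by isometries with a basepoint o, and let d_Q = max_{g ∈ Q} d(go, o) for a compact subset Q ⊂ G. Suppose for every a in a sub-semigroup A⁺ and every p in a sub-semigroup P we have d(ao, pao) ≤ d(o, po). Then for any h ∈ G, g ∈ Q, and R > 0: if ξ lies in the shadow O_R(go, ho) then ξ lies in O_{R + d_Q}(o, ho). -/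
/-- The shadow `O_R(q, p)` of the ball `B(p, R)` viewed from `q`. -/
def shadowPt {G X F : Type*} [Group G] [MulAction G X] [MulAction G F]
    [MetricSpace X] (o : X) (ξ₀ : F) (Aplus : Set G) (R : ℝ) (q p : X) : Set F :=
  {ξ | ∃ g : G, g • o = q ∧ (∃ a ∈ Aplus, dist ((g * a) • o) p < R) ∧ ξ = g • ξ₀}

/-- Shadow triangle inequality: if `d(g • o, o) ≤ dQ`, then the shadow of
`B(h • o, R)` viewed from `g • o` is contained in the shadow of the same ball
viewed from `o` with the radius enlarged to `R + dQ`.  The hypotheses encode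
the Iwasawa decomposition `G = KP` with `K` fixing `o` and `P` stabilizing
`ξ₀`, and the contraction property `d(ao, pao) ≤ d(o, po)` for `a` in the
sub-semigroup `A⁺` and `p` in the sub-semigroup `P`. -/
theorem stmt_9 {G X F : Type*} [Group G] [MulAction G X] [MulAction G F]
    [MetricSpace X] (o : X) (ξ₀ : F) (Aplus Pset : Set G)
    (hAsemi : ∀ a ∈ Aplus, ∀ b ∈ Aplus, a * b ∈ Aplus)
    (hPsemi : ∀ p ∈ Pset, ∀ q ∈ Pset, p * q ∈ Pset)
    (hiso : ∀ γ : G, Isometry fun x : X => γ • x)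
    (hcontr : ∀ a ∈ Aplus, ∀ p ∈ Pset, dist (a • o) ((p * a) • o) ≤ dist o (p • o))
    (hIwa : ∀ g : G, ∃ k p, p ∈ Pset ∧ g = k * p ∧ k • o = o)
    (hstab : ∀ p ∈ Pset, p • ξ₀ = ξ₀)
    (dQ R : ℝ) (hR : 0 < R) (g h : G) (hg : dist (g • o) o ≤ dQ)
    (ξ : F) (hξ : ξ ∈ shadowPt o ξ₀ Aplus R (g • o) (h • o)) :
    ξ ∈ shadowPt o ξ₀ Aplus (R + dQ) o (h • o) := by
  obtain ⟨g', hg'o, ⟨a, ha, hdist⟩, hxi⟩ := hξ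
  obtain ⟨k, p, hp, hkp, hko⟩ := hIwa g'
  refine ⟨k, hko, ⟨a, ha, ?_⟩, ?_⟩
  · have h1 : dist ((k * a) • o) ((g' * a) • o) ≤ dQ := by
      have : (g' * a) • o = (k * (p * a)) • o := by
        rw [hkp]; group
      rw [this, mul_smul, mul_smul, (hiso k).dist_eq]
      calc dist (a • o) ((p * a) • o) ≤ dist o (p • o) := hcontr a ha p hp
        _ = dist (k • o) ((k * p) • o) := by
            rw [mul_smul, (hiso k).dist_eq]
        _ = dist (g • o) o := by rw [hko, ← hkp, hg'o, dist_comm]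
        _ ≤ dQ := hg
    calc dist ((k * a) • o) (h • o)
        ≤ dist ((k * a) • o) ((g' * a) • o) + dist ((g' * a) • o) (h • o) :=
          dist_triangle _ _ _
      _ < dQ + R := add_lt_add_of_le_of_lt h1 hdist
      _ = R + dQ := add_comm _ _
  · rw [hxi, hkp, mul_smul, hstab p hp]
end

section
/- Let V be a finite-dimensional real normed vector space, W ≤ V a subspace, and p : V → V/(W ∩ ker ψ) the quotient map, where ψ is a linear functional with W ⊄ ker ψ. Then there exists c > 1 such that for all R > 0 and every nonzero u ∈ W with ψ(u) > 0: {v ∈ V : dist(p(v), ℝ·p(u)) < R/c} ⊆ {v ∈ V : dist(v, W) < R} ⊆ {v ∈ V : dist(p(v), ℝ·p(u)) < cR}, where distances in the quotient are taken with respect to any fixed norm there. -/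
/-!
Since `ker p ≤ W`, the map `p` induces an injective linear map `V ⧸ W → Q ⧸ p(W)`, and quotient
norms are distances to the subspace, so on a finite-dimensional space `dist(v, W)` and
`dist(p v, p(W))` are comparable up to a constant. Because `W ∩ ker ψ ≤ ker p` has codimension one
in `W`, the image `p(W)` is the line through `p u` for every `u ∈ W` with `ψ u ≠ 0`; hence the
constant does not depend on `u`.
-/

open Metric

theorem Submodule.Quotient.norm_mk_eq_infDist {R M : Type*} [Ring R] [SeminormedAddCommGroup M]
    [Module R M] (S : Submodule R M) (x : M) :
    ‖(Submodule.Quotient.mk x : M ⧸ S)‖ = infDist x S :=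
  QuotientAddGroup.norm_mk x

theorem Submodule.mapQ_map_injective {R M N : Type*} [Ring R] [AddCommGroup M] [Module R M]
    [AddCommGroup N] [Module R N] (f : M →ₗ[R] N) {W : Submodule R M} (hW : LinearMap.ker f ≤ W) :
    Function.Injective (W.mapQ (W.map f) f (le_comap_map f W)) := by
  rw [← LinearMap.ker_eq_bot, ker_mapQ, comap_map_eq, sup_eq_left.mpr hW, mkQ_map_self]

theorem Submodule.map_eq_span_singleton_of_inf_ker_le {K V Q : Type*} [Field K] [AddCommGroup V]
    [Module K V] [AddCommGroup Q] [Module K Q] (ψ : V →ₗ[K] K) (p : V →ₗ[K] Q) {W : Submodule K V}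
    (hker : W ⊓ LinearMap.ker ψ ≤ LinearMap.ker p) {u : V} (hu : u ∈ W) (hψu : ψ u ≠ 0) :
    W.map p = K ∙ p u := by
  refine le_antisymm ?_ (span_le.mpr (Set.singleton_subset_iff.mpr ⟨u, hu, rfl⟩))
  rintro - ⟨w, hw, rfl⟩
  have hcomp : w - (ψ w / ψ u) • u ∈ W ⊓ LinearMap.ker ψ :=
    ⟨W.sub_mem hw (W.smul_mem _ hu), by simp [hψu]⟩
  have hpw : p w = (ψ w / ψ u) • p u := by
    rw [← map_smul, ← LinearMap.sub_mem_ker_iff]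
    exact hker hcomp
  rw [hpw]
  exact smul_mem _ _ (mem_span_singleton_self _)

section FiniteDimensional

variable {𝕜 E F : Type*} [NontriviallyNormedField 𝕜] [CompleteSpace 𝕜]
  [NormedAddCommGroup E] [NormedSpace 𝕜 E] [FiniteDimensional 𝕜 E]
  [NormedAddCommGroup F] [NormedSpace 𝕜 F]

theorem LinearMap.exists_norm_le_mul_and_le_mul_of_injective (f : E →ₗ[𝕜] F)
    (hf : Function.Injective f) : ∃ C > 0, ∀ x, ‖x‖ ≤ C * ‖f x‖ ∧ ‖f x‖ ≤ C * ‖x‖ := by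
  obtain ⟨K, -, hK⟩ := f.injective_iff_antilipschitz.mp hf
  let fc : E →L[𝕜] F := f.toContinuousLinearMap
  refine ⟨K + ‖fc‖ + 1, by positivity, fun x => ⟨?_, ?_⟩⟩
  · calc ‖x‖ ≤ K * ‖f x‖ := ZeroHomClass.bound_of_antilipschitz f hK x
      _ ≤ (K + ‖fc‖ + 1) * ‖f x‖ := by gcongr; linarith [norm_nonneg fc]
  · calc ‖f x‖ ≤ ‖fc‖ * ‖x‖ := fc.le_opNorm x
      _ ≤ (K + ‖fc‖ + 1) * ‖x‖ := by gcongr; linarith [K.coe_nonneg]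

theorem Submodule.exists_infDist_le_mul_infDist_map (f : E →ₗ[𝕜] F) {W : Submodule 𝕜 E}
    (hW : LinearMap.ker f ≤ W) : ∃ C > 0, ∀ v,
      infDist v W ≤ C * infDist (f v) (W.map f) ∧ infDist (f v) (W.map f) ≤ C * infDist v W := by
  have : IsClosed (W : Set E) := W.closed_of_finiteDimensional
  have : IsClosed ((W.map f : Submodule 𝕜 F) : Set F) := (W.map f).closed_of_finiteDimensional
  obtain ⟨C, hC, hfC⟩ :=
    (W.mapQ (W.map f) f (le_comap_map f W)).exists_norm_le_mul_and_le_mul_of_injective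
      (mapQ_map_injective f hW)
  refine ⟨C, hC, fun v => ?_⟩
  simpa only [mapQ_apply, Quotient.norm_mk_eq_infDist] using hfC (Submodule.Quotient.mk v)

end FiniteDimensional

theorem stmt_13_general {V Q : Type*} [NormedAddCommGroup V] [NormedSpace ℝ V]
    [FiniteDimensional ℝ V] [NormedAddCommGroup Q] [NormedSpace ℝ Q]
    (ψ : V →ₗ[ℝ] ℝ) (W : Submodule ℝ V)
    (p : V →ₗ[ℝ] Q)
    (hker : LinearMap.ker p = W ⊓ LinearMap.ker ψ) :
    ∃ c > (1:ℝ), ∀ R > (0:ℝ), ∀ u ∈ W, u ≠ 0 → 0 < ψ u →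
      ({v : V | Metric.infDist (p v) (Submodule.span ℝ {p u} : Set Q) < R / c} ⊆
          {v : V | Metric.infDist v (W : Set V) < R}) ∧
      ({v : V | Metric.infDist v (W : Set V) < R} ⊆
          {v : V | Metric.infDist (p v) (Submodule.span ℝ {p u} : Set Q) < c * R}) := by
  obtain ⟨C, hC, hcomp⟩ := W.exists_infDist_le_mul_infDist_map p (hker ▸ inf_le_left)
  refine ⟨C + 1, by linarith, fun R hR u hu _ hψu => ?_⟩
  rw [← W.map_eq_span_singleton_of_inf_ker_le ψ p hker.ge hu hψu.ne']
  refine ⟨fun v hv => ?_, fun v hv => ?_⟩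
  · calc infDist v W ≤ C * infDist (p v) (W.map p) := (hcomp v).1
      _ ≤ C * (R / (C + 1)) := by gcongr; exact hv.le
      _ < R := by rw [mul_div_assoc', div_lt_iff₀ (by linarith)]; linarith
  · calc infDist (p v) (W.map p) ≤ C * infDist v W := (hcomp v).2
      _ < C * R := by gcongr; exact hv
      _ ≤ (C + 1) * R := by linarith

/-- Norm comparison between the distance from a subspace `W` and the distance,
in the quotient `Q ≅ V/(W ∩ ker ψ)` (equipped with any fixed norm, modelled by
a surjective linear map `p` with kernel `W ∩ ker ψ`), from the line through
`p(u)`: there is `c > 1` such that for all `R > 0` and all `u ∈ W` with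
`ψ(u) > 0`,
`{v : dist(p v, ℝ·p u) < R/c} ⊆ {v : dist(v, W) < R} ⊆ {v : dist(p v, ℝ·p u) < cR}`. -/
theorem stmt_13 {V Q : Type*} [NormedAddCommGroup V] [NormedSpace ℝ V]
    [FiniteDimensional ℝ V] [NormedAddCommGroup Q] [NormedSpace ℝ Q]
    (ψ : V →ₗ[ℝ] ℝ) (W : Submodule ℝ V) (hW : ¬ W ≤ LinearMap.ker ψ)
    (p : V →ₗ[ℝ] Q) (hsurj : Function.Surjective p)
    (hker : LinearMap.ker p = W ⊓ LinearMap.ker ψ) :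
    ∃ c > (1:ℝ), ∀ R > (0:ℝ), ∀ u ∈ W, u ≠ 0 → 0 < ψ u →
      ({v : V | Metric.infDist (p v) (Submodule.span ℝ {p u} : Set Q) < R / c} ⊆
          {v : V | Metric.infDist v (W : Set V) < R}) ∧
      ({v : V | Metric.infDist v (W : Set V) < R} ⊆
          {v : V | Metric.infDist (p v) (Submodule.span ℝ {p u} : Set Q) < c * R}) :=
  stmt_13_general ψ W p hker
end

section
/- Let (Ω, m) be a σ-finite Borel measure space with a measurable measure-preserving ℝ-flow (a_t). Suppose that for m-a.e. x ∈ Ω there exists a compact subset B (depending on x) with ∫_{-∞}^{∞} 1_B(x·a_t) dt = ∞. Then the flow (Ω, (a_t), m) is completely conservative. -/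
/-!
Write `f_S x = ∫ 1_S(x·a_t) dt` for the time the orbit of `x` spends in `S`. It is invariant
along orbits, and measure preservation together with Fubini gives the symmetry
`∫_P f_Q dm = ∫_Q f_P dm`. If `W` is a set on which `f_W ≤ N`, invariance gives `f_W ≤ N`
everywhere; if moreover `f_U = ∞` on `W` for some `U` of finite measure, then
`∞ · m W = ∫_W f_U = ∫_U f_W ≤ N · m U < ∞`, so `m W = 0`. Exhausting `Ω` by countably many
compact sets `K_n`, almost every point of a set `B` with finite occupation time lies in one of
the countably many sets `B ∩ {f_B ≤ N} ∩ {f_{K_n} = ∞}`, each of which is null.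
-/

open MeasureTheory Set
open scoped ENNReal

section OccupationTime

variable {Ω : Type*} (a : ℝ → Ω → Ω)

noncomputable def occupationTime (S : Set Ω) (x : Ω) : ℝ≥0∞ :=
  ∫⁻ t : ℝ, S.indicator (fun _ => 1) (a t x)

theorem occupationTime_mono {S T : Set Ω} (hST : S ⊆ T) (x : Ω) :
    occupationTime a S x ≤ occupationTime a T x :=
  lintegral_mono fun _ => indicator_le_indicator_of_subset hST (fun _ => zero_le) _

theorem occupationTime_apply_flow (hadd : ∀ s t : ℝ, ∀ x, a (s + t) x = a s (a t x))
    (S : Set Ω) (s : ℝ) (x : Ω) : occupationTime a S (a s x) = occupationTime a S x := by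
  simp only [occupationTime, ← hadd]
  exact lintegral_add_right_eq_self (fun t => S.indicator (fun _ => 1) (a t x)) s

theorem occupationTime_le_of_forall_mem (hadd : ∀ s t : ℝ, ∀ x, a (s + t) x = a s (a t x))
    {S : Set Ω} {c : ℝ≥0∞} (h : ∀ x ∈ S, occupationTime a S x ≤ c) (y : Ω) :
    occupationTime a S y ≤ c := by
  by_cases hy : ∃ s, a s y ∈ S
  · obtain ⟨s, hs⟩ := hy
    rw [← occupationTime_apply_flow a hadd S s y]
    exact h _ hs
  · simp only [not_exists] at hy
    have hzero : occupationTime a S y = 0 := by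
      simp [occupationTime, indicator_of_notMem (hy _)]
    simp [hzero]

variable [MeasurableSpace Ω]

theorem measurable_occupationTime (hmeas : Measurable fun p : ℝ × Ω => a p.1 p.2)
    {S : Set Ω} (hS : MeasurableSet S) : Measurable (occupationTime a S) :=
  ((measurable_const.indicator hS).comp (hmeas.comp measurable_swap)).lintegral_prod_right'

variable (m : Measure Ω) [SFinite m]

theorem setLIntegral_occupationTime (hmeas : Measurable fun p : ℝ × Ω => a p.1 p.2)
    (P : Set Ω) {Q : Set Ω} (hQ : MeasurableSet Q) :
    ∫⁻ x in P, occupationTime a Q x ∂m = ∫⁻ t : ℝ, m (a t ⁻¹' Q ∩ P) := by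
  have hfun : Measurable
      (Function.uncurry fun (x : Ω) (t : ℝ) => Q.indicator (fun _ => (1 : ℝ≥0∞)) (a t x)) :=
    (measurable_const.indicator hQ).comp (hmeas.comp measurable_swap)
  simp only [occupationTime]
  rw [lintegral_lintegral_swap hfun.aemeasurable]
  refine lintegral_congr fun t => ?_
  have hpre : MeasurableSet (a t ⁻¹' Q) :=
    hQ.preimage (hmeas.comp (measurable_const.prodMk measurable_id))
  rw [← Measure.restrict_apply hpre, ← lintegral_indicator_one hpre]
  rfl

theorem setLIntegral_occupationTime_comm (hmeas : Measurable fun p : ℝ × Ω => a p.1 p.2)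
    (h0 : ∀ x, a 0 x = x) (hadd : ∀ s t : ℝ, ∀ x, a (s + t) x = a s (a t x))
    (hmp : ∀ t, MeasurePreserving (a t) m m) {P Q : Set Ω} (hP : MeasurableSet P)
    (hQ : MeasurableSet Q) :
    ∫⁻ x in P, occupationTime a Q x ∂m = ∫⁻ x in Q, occupationTime a P x ∂m := by
  have hswap (t : ℝ) : m (a t ⁻¹' Q ∩ P) = m (a (-t) ⁻¹' P ∩ Q) := by
    have hcancel : a (-t) ⁻¹' (a t ⁻¹' Q) = Q := by
      ext x
      simp [← hadd, h0]
    rw [← (hmp (-t)).measure_preimage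
      ((hQ.preimage (hmp t).measurable).inter hP).nullMeasurableSet,
      preimage_inter, hcancel, inter_comm]
  rw [setLIntegral_occupationTime a m hmeas P hQ, setLIntegral_occupationTime a m hmeas Q hP,
    lintegral_congr hswap]
  exact lintegral_neg_eq_self (fun t => m (a t ⁻¹' P ∩ Q))

theorem measure_eq_zero_of_occupationTime_eq_top
    (hmeas : Measurable fun p : ℝ × Ω => a p.1 p.2)
    (h0 : ∀ x, a 0 x = x) (hadd : ∀ s t : ℝ, ∀ x, a (s + t) x = a s (a t x))
    (hmp : ∀ t, MeasurePreserving (a t) m m) {W U : Set Ω} (hW : MeasurableSet W)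
    (hU : MeasurableSet U) (hUfin : m U ≠ ⊤) {c : ℝ≥0∞} (hc : c ≠ ⊤)
    (hWc : ∀ x ∈ W, occupationTime a W x ≤ c) (hUtop : ∀ x ∈ W, occupationTime a U x = ⊤) :
    m W = 0 := by
  by_contra hW0
  have hinfinite : ∫⁻ x in W, occupationTime a U x ∂m = ⊤ := by
    rw [setLIntegral_congr_fun hW hUtop, setLIntegral_const, ENNReal.top_mul hW0]
  have hfinite : ∫⁻ x in U, occupationTime a W x ∂m ≤ c * m U := by
    rw [← setLIntegral_const]
    exact lintegral_mono (occupationTime_le_of_forall_mem a hadd hWc)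
  rw [setLIntegral_occupationTime_comm a m hmeas h0 hadd hmp hW hU] at hinfinite
  exact ENNReal.mul_ne_top hc hUfin (top_le_iff.1 (hinfinite ▸ hfinite))

theorem measure_eq_zero_of_ae_occupationTime_lt_top
    (hmeas : Measurable fun p : ℝ × Ω => a p.1 p.2)
    (h0 : ∀ x, a 0 x = x) (hadd : ∀ s t : ℝ, ∀ x, a (s + t) x = a s (a t x))
    (hmp : ∀ t, MeasurePreserving (a t) m m) {ι : Type*} [Countable ι] {U : ι → Set Ω}
    (hU : ∀ i, MeasurableSet (U i)) (hUfin : ∀ i, m (U i) ≠ ⊤)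
    (hrec : ∀ᵐ x ∂m, ∃ i, occupationTime a (U i) x = ⊤) {B : Set Ω} (hB : MeasurableSet B)
    (hBfin : ∀ᵐ x ∂m.restrict B, occupationTime a B x < ⊤) : m B = 0 := by
  set W : ι → ℕ → Set Ω := fun i N =>
    B ∩ {x | occupationTime a B x ≤ N} ∩ {x | occupationTime a (U i) x = ⊤}
  have hWnull (i : ι) (N : ℕ) : m (W i N) = 0 := by
    have hWmeas : MeasurableSet (W i N) :=
      (hB.inter (measurableSet_le (measurable_occupationTime a hmeas hB) measurable_const)).inter
        (measurable_occupationTime a hmeas (hU i) (measurableSet_singleton ⊤))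
    exact measure_eq_zero_of_occupationTime_eq_top a m hmeas h0 hadd hmp hWmeas (hU i) (hUfin i)
      (ENNReal.natCast_ne_top N)
      (fun x hx => (occupationTime_mono a (fun _ hy => hy.1.1) x).trans hx.1.2) fun _ hx => hx.2
  have hcover : ∀ᵐ x ∂m, x ∈ B → x ∈ ⋃ i, ⋃ N : ℕ, W i N := by
    filter_upwards [(ae_restrict_iff' hB).1 hBfin, hrec] with x hfin ⟨i, hi⟩ hxB
    obtain ⟨N, hN⟩ := ENNReal.exists_nat_gt (hfin hxB).ne
    exact mem_iUnion₂.2 ⟨i, N, ⟨hxB, hN.le⟩, hi⟩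
  exact measure_mono_null_ae hcover (measure_iUnion_null fun i => measure_iUnion_null (hWnull i))

end OccupationTime

theorem stmt_14_general {Ω : Type*} [TopologicalSpace Ω] [MeasurableSpace Ω] [BorelSpace Ω]
    [SecondCountableTopology Ω] [LocallyCompactSpace Ω] [T2Space Ω]
    (m : Measure Ω) [m.Regular]
    (a : ℝ → Ω → Ω) (hmeas : Measurable fun p : ℝ × Ω => a p.1 p.2)
    (h0 : ∀ x, a 0 x = x) (hadd : ∀ s t : ℝ, ∀ x, a (s + t) x = a s (a t x))
    (hmp : ∀ t, MeasurePreserving (a t) m m)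
    (hrec : ∀ᵐ x ∂m, ∃ B : Set Ω, IsCompact B ∧
      ∫⁻ t : ℝ, B.indicator (fun _ => (1:ℝ≥0∞)) (a t x) = ⊤) :
    ∀ B : Set Ω, MeasurableSet B →
      (∀ᵐ x ∂m.restrict B, ∫⁻ t : ℝ, B.indicator (fun _ => (1:ℝ≥0∞)) (a t x) < ⊤) →
      m B = 0 := by
  intro B hB hBfin
  let K := CompactExhaustion.choice Ω
  refine measure_eq_zero_of_ae_occupationTime_lt_top a m hmeas h0 hadd hmp
    (fun n => (K.isCompact n).measurableSet) (fun n => (K.isCompact n).measure_lt_top.ne) ?_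
    hB hBfin
  filter_upwards [hrec] with x ⟨C, hC, hCtop⟩
  obtain ⟨n, hCK⟩ := K.exists_superset_of_isCompact hC
  exact ⟨n, top_le_iff.1 (hCtop.symm.le.trans (occupationTime_mono a hCK x))⟩

/-- Criterion for complete conservativity: if almost every point has a compact
set in which its orbit spends infinite time, then there is no wandering set of
positive measure (here `Ω` is second countable locally compact Hausdorff and
`m` is a Radon measure). -/
theorem stmt_14 {Ω : Type*} [TopologicalSpace Ω] [MeasurableSpace Ω] [BorelSpace Ω]
    [SecondCountableTopology Ω] [LocallyCompactSpace Ω] [T2Space Ω]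
    (m : Measure Ω) [SigmaFinite m] [m.Regular]
    (a : ℝ → Ω → Ω) (hmeas : Measurable fun p : ℝ × Ω => a p.1 p.2)
    (h0 : ∀ x, a 0 x = x) (hadd : ∀ s t : ℝ, ∀ x, a (s + t) x = a s (a t x))
    (hmp : ∀ t, MeasurePreserving (a t) m m)
    (hrec : ∀ᵐ x ∂m, ∃ B : Set Ω, IsCompact B ∧
      ∫⁻ t : ℝ, B.indicator (fun _ => (1:ℝ≥0∞)) (a t x) = ⊤) :
    ∀ B : Set Ω, MeasurableSet B →
      (∀ᵐ x ∂m.restrict B, ∫⁻ t : ℝ, B.indicator (fun _ => (1:ℝ≥0∞)) (a t x) < ⊤) →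
      m B = 0 :=
  stmt_14_general m a hmeas h0 hadd hmp hrec
end
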